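/- Let α ∈ (0,1) and let τ⋆(x) := Q_{1−α}(P_{V|X=x}) be measurable. Define the rectified score Ṽ(x,y) := V(x,y) − τ⋆(x) and let Ṽ := Ṽ(X,Y). Then Q_{1−α}(P_{Ṽ}) = 0 and, for P_X-almost every x ∈ 𝒳, Q_{1−α}(P_{Ṽ|X=x}) = 0; in particular the marginal and conditional (1−α)-quantiles of the rectified score coincide. -/

import Mathlib

/-!
Conditionally on `X = x`, the rectified score is `V` shifted by the constant `τ⋆(x)`, so its
conditional `(1-α)`-quantile is `τ⋆(x) - τ⋆(x) = 0`. The law of `Ṽ` is the mixture over `P_X` of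
these conditional laws; a mixture of distributions that all have `β`-quantile `q` has `β`-quantile
`q`, because `Q_β(P) ≤ t ↔ β ≤ P((-∞, t])` and the CDF of the mixture is the average of the CDFs.
-/

open MeasureTheory ProbabilityTheory

/-- The `β`-quantile of a probability measure `P` on `ℝ`:
`Q_β(P) = inf {t : P((-∞, t]) ≥ β}`. -/
noncomputable def quantile (P : Measure ℝ) (β : ℝ) : ℝ :=
  sInf {t : ℝ | ENNReal.ofReal β ≤ P (Set.Iic t)}

open Set Filter Topology Function

lemma StieltjesFunction.csInf_setOf_le_le_iff (f : StieltjesFunction ℝ) {β t : ℝ}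
    (hne : ∃ s, β ≤ f s) (hbdd : BddBelow {s | β ≤ f s}) :
    sInf {s | β ≤ f s} ≤ t ↔ β ≤ f t := by
  refine ⟨fun ht => ?_, fun ht => csInf_le hbdd ht⟩
  set q := sInf {s | β ≤ f s}
  have hright : Tendsto f (𝓝[>] q) (𝓝 (f q)) := (f.right_continuous q).mono Ioi_subset_Ici_self
  have hq : β ≤ f q := ge_of_tendsto hright <| eventually_nhdsWithin_of_forall fun u hu => by
    obtain ⟨s, hs, hsu⟩ := (csInf_lt_iff hbdd hne).mp hu
    exact hs.trans (f.mono hsu.le)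
  exact hq.trans (f.mono ht)

section Quantile

variable {P : Measure ℝ} [IsProbabilityMeasure P] {β : ℝ}

lemma quantile_eq_sInf_cdf : quantile P β = sInf {t | β ≤ cdf P t} := by
  simp only [quantile, ← ofReal_cdf, ENNReal.ofReal_le_ofReal_iff (cdf_nonneg P _)]

lemma quantile_le_iff (hβ0 : 0 < β) (hβ1 : β < 1) {t : ℝ} :
    quantile P β ≤ t ↔ ENNReal.ofReal β ≤ P (Iic t) := by
  rw [quantile_eq_sInf_cdf, (cdf P).csInf_setOf_le_le_iff, ← ofReal_cdf,
    ENNReal.ofReal_le_ofReal_iff (cdf_nonneg P _)]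
  · exact ((tendsto_cdf_atTop P).eventually (lt_mem_nhds hβ1)).exists.imp fun _ => le_of_lt
  · obtain ⟨t₀, ht₀⟩ := eventually_atBot.mp ((tendsto_cdf_atBot P).eventually (gt_mem_nhds hβ0))
    exact ⟨t₀, fun s hs => le_of_not_gt fun hst => (ht₀ s hst.le).not_ge hs⟩

lemma quantile_map_sub_const (hβ0 : 0 < β) (hβ1 : β < 1) (c : ℝ) :
    quantile (P.map (· - c)) β = quantile P β - c := by
  have hc : Measurable fun v : ℝ => v - c := measurable_sub_const c
  have := Measure.isProbabilityMeasure_map (μ := P) hc.aemeasurable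
  refine eq_of_forall_ge_iff fun t => ?_
  rw [quantile_le_iff hβ0 hβ1, sub_le_iff_le_add, quantile_le_iff hβ0 hβ1,
    Measure.map_apply hc measurableSet_Iic]
  simp only [preimage, mem_Iic, sub_le_iff_le_add]
  rfl

end Quantile

lemma quantile_comp_eq_of_ae_quantile_eq {γ : Type*} [MeasurableSpace γ] {ν : Measure γ}
    [IsProbabilityMeasure ν] {κ : Kernel γ ℝ} [IsMarkovKernel κ] {β q : ℝ}
    (hβ0 : 0 < β) (hβ1 : β < 1) (hκ : ∀ᵐ x ∂ν, quantile (κ x) β = q) :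
    quantile (κ ∘ₘ ν) β = q := by
  refine eq_of_forall_ge_iff fun t => ?_
  rw [quantile_le_iff hβ0 hβ1, Measure.bind_apply measurableSet_Iic κ.aemeasurable]
  have hconst : ∫⁻ _, ENNReal.ofReal β ∂ν = ENNReal.ofReal β := by simp
  constructor
  · intro hle
    by_contra! htq
    have hlt : ∀ᵐ x ∂ν, κ x (Iic t) < ENNReal.ofReal β := by
      filter_upwards [hκ] with x hx
      exact not_le.mp fun h => htq.not_ge (hx ▸ (quantile_le_iff hβ0 hβ1).mpr h)
    have := lintegral_strict_mono (IsProbabilityMeasure.ne_zero ν) aemeasurable_const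
      (ne_top_of_le_ne_top ENNReal.one_ne_top ?_) hlt
    · exact (hconst ▸ this).not_ge hle
    · calc ∫⁻ x, κ x (Iic t) ∂ν ≤ ∫⁻ _, 1 ∂ν := lintegral_mono fun x => prob_le_one
        _ = 1 := by simp
  · intro hqt
    calc ENNReal.ofReal β = ∫⁻ _, ENNReal.ofReal β ∂ν := hconst.symm
      _ ≤ ∫⁻ x, κ x (Iic t) ∂ν := lintegral_mono_ae <| by
        filter_upwards [hκ] with x hx
        exact (quantile_le_iff hβ0 hβ1).mp (hx ▸ hqt)

section Fiberwise

variable {β Ω Ω' : Type*} [MeasurableSpace β] [MeasurableSpace Ω] [MeasurableSpace Ω']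
  {f : β → Ω → Ω'}

lemma ProbabilityTheory.Kernel.map_id_prod_apply (κ : Kernel β Ω) [IsSFiniteKernel κ]
    (hf : Measurable (uncurry f)) (x : β) :
    (Kernel.id ×ₖ κ).map (uncurry f) x = (κ x).map (f x) := by
  rw [Kernel.map_apply _ hf, Kernel.prod_apply, Kernel.id_apply, Measure.dirac_prod,
    Measure.map_map hf measurable_prodMk_left]
  rfl

lemma MeasureTheory.Measure.map_compProd_prodMk_uncurry (ν : Measure β) [SFinite ν]
    (κ : Kernel β Ω) [IsSFiniteKernel κ] (hf : Measurable (uncurry f)) :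
    (ν ⊗ₘ κ).map (fun q => (q.1, f q.1 q.2)) = ν ⊗ₘ (Kernel.id ×ₖ κ).map (uncurry f) := by
  have hg : Measurable fun q : β × Ω => (q.1, f q.1 q.2) := measurable_fst.prodMk hf
  ext s hs
  rw [Measure.map_apply hg hs, Measure.compProd_apply (hg hs), Measure.compProd_apply hs]
  refine lintegral_congr fun x => ?_
  rw [Kernel.map_id_prod_apply κ hf,
    Measure.map_apply hf.of_uncurry_left (measurable_prodMk_left hs)]
  rfl

lemma ProbabilityTheory.condDistrib_uncurry_ae_eq_map [StandardBorelSpace Ω] [Nonempty Ω]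
    [StandardBorelSpace Ω'] [Nonempty Ω'] {α : Type*} [MeasurableSpace α] {μ : Measure α}
    [IsFiniteMeasure μ] {X : α → β} {W : α → Ω} (hX : Measurable X) (hW : Measurable W)
    (hf : Measurable (uncurry f)) :
    ∀ᵐ x ∂μ.map X, condDistrib (fun a => f (X a) (W a)) X μ x = (condDistrib W X μ x).map (f x) := by
  have hlaw : μ.map (fun a => (X a, f (X a) (W a)))
      = μ.map X ⊗ₘ (Kernel.id ×ₖ condDistrib W X μ).map (uncurry f) := by
    have hg : Measurable fun q : β × Ω => (q.1, f q.1 q.2) := measurable_fst.prodMk hf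
    rw [← Measure.map_compProd_prodMk_uncurry _ _ hf, compProd_map_condDistrib hW.aemeasurable,
      Measure.map_map hg (hX.prodMk hW)]
    rfl
  filter_upwards [condDistrib_ae_eq_of_measure_eq_compProd_of_measurable hX
    (hf.comp (hX.prodMk hW)) hlaw] with x hx
  rw [← Kernel.map_id_prod_apply _ hf]
  exact hx

end Fiberwise

/-- For the additively rectified score
`Ṽ(x,y) = V(x,y) − τ⋆(x)` with `τ⋆(x) = Q_{1-α}(P_{V|X=x})`, the marginal
`(1-α)`-quantile of `Ṽ(X,Y)` equals `0`, and for `P_X`-a.e. `x` the conditional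
`(1-α)`-quantile of `Ṽ(X,Y)` given `X = x` also equals `0`. -/
theorem rectified_score_additive_quantile
    {Ω : Type*} [MeasurableSpace Ω]
    (μ : Measure Ω) [IsProbabilityMeasure μ]
    {p d : ℕ}
    (X : Ω → (Fin p → ℝ)) (Y : Ω → (Fin d → ℝ))
    (hX : Measurable X) (hY : Measurable Y)
    (V : (Fin p → ℝ) → (Fin d → ℝ) → ℝ)
    (hV : Measurable (Function.uncurry V))
    (α : ℝ) (hα : α ∈ Set.Ioo (0 : ℝ) 1)
    -- `τ⋆(x) = Q_{1-α}(P_{V | X = x})`, measurable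
    (τstar : (Fin p → ℝ) → ℝ)
    (hτstar_def : ∀ x, τstar x =
      quantile (condDistrib (fun ω => V (X ω) (Y ω)) X μ x) (1 - α))
    (hτstar_meas : Measurable τstar) :
    quantile (μ.map (fun ω => V (X ω) (Y ω) - τstar (X ω))) (1 - α) = 0 ∧
    ∀ᵐ x ∂(μ.map X),
      quantile (condDistrib (fun ω => V (X ω) (Y ω) - τstar (X ω)) X μ x) (1 - α) = 0 := by
  obtain ⟨hα0, hα1⟩ := hα
  have hβ0 : 0 < 1 - α := sub_pos.mpr hα1
  have hβ1 : 1 - α < 1 := sub_lt_self 1 hα0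
  have hW : Measurable fun ω => V (X ω) (Y ω) := hV.comp (hX.prodMk hY)
  have hrect : Measurable fun ω => V (X ω) (Y ω) - τstar (X ω) := hW.sub (hτstar_meas.comp hX)
  have hcond : ∀ᵐ x ∂(μ.map X),
      quantile (condDistrib (fun ω => V (X ω) (Y ω) - τstar (X ω)) X μ x) (1 - α) = 0 := by
    filter_upwards [condDistrib_uncurry_ae_eq_map (f := fun x v => v - τstar x) hX hW
      (by fun_prop)] with x hx
    rw [hx, quantile_map_sub_const hβ0 hβ1, hτstar_def, sub_self]
  refine ⟨?_, hcond⟩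
  have := Measure.isProbabilityMeasure_map (μ := μ) hX.aemeasurable
  rw [← condDistrib_comp_map hX.aemeasurable hrect.aemeasurable]
  exact quantile_comp_eq_of_ae_quantile_eq hβ0 hβ1 hcond
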